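/- Let a : ℕ → ℕ → ℝ be an infinite matrix. Then a ∈ (c : c) if and only if all three of the following hold: (4.2) for each n the series Σ_k |a(n,k)| converges and sup_n Σ_k |a(n,k)| < ∞; (4.3) for each k the limit lim_{n→∞} a(n,k) exists; (4.4) the limit lim_{n→∞} Σ_k a(n,k) exists. -/

import Mathlib

/-!
For `⇐`, write `x = (x - L) + L`; the constant part contributes `L · Σ_k a(n,k)`. For the null
part `y`, subtract the column limits `l`, which are again `ℓ¹`-bounded by `M` (Fatou for series):
the first `K` terms of `Σ_k (a(n,k) - l_k) y_k` tend to `0` column by column, and the tail is at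
most `2M · sup_{k ≥ K} |y_k|`.

For `⇒`, testing `a` on the constant sequence `1` and on the unit vectors gives summable rows,
(4.4) and (4.3). The uniform bound comes from Banach–Steinhaus for the row functionals
`f ↦ Σ_k a(n,k) f(k)` on the Banach space `c₀ = C₀(ℕ, ℝ)`: evaluated on sign vectors, such a
functional shows that its norm dominates `Σ_k |a(n,k)|`.
-/

open Filter Topology ZeroAtInfty

/-- The set of null real sequences. -/
def seqC0 : Set (ℕ → ℝ) := {y | Filter.Tendsto y Filter.atTop (nhds 0)}

/-- The set of convergent real sequences. -/
def seqC : Set (ℕ → ℝ) := {y | ∃ l : ℝ, Filter.Tendsto y Filter.atTop (nhds l)}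

/-- The set of bounded real sequences. -/
def seqLinf : Set (ℕ → ℝ) := {y | ∃ M : ℝ, ∀ n, |y n| ≤ M}

/-- The set of absolutely summable real sequences. -/
def seqL1 : Set (ℕ → ℝ) := {y | Summable fun n => |y n|}

/-- `a ∈ (X : Y)`: for every `x ∈ X` the series `Σ_k a(n,k)·x_k` converges
absolutely for each `n`, and the transformed sequence belongs to `Y`. -/
def MatClass (a : ℕ → ℕ → ℝ) (X Y : Set (ℕ → ℝ)) : Prop :=
  ∀ x ∈ X, (∀ n, Summable fun k => |a n k * x k|) ∧ (fun n => ∑' k, a n k * x k) ∈ Y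

lemma summable_abs_mul_of_abs_le {ι : Type*} {b f : ι → ℝ} {B : ℝ}
    (hb : Summable fun k => |b k|) (hf : ∀ k, |f k| ≤ B) : Summable fun k => |b k * f k| :=
  (hb.mul_right B).of_nonneg_of_le (fun _ => abs_nonneg _) fun k => by
    rw [abs_mul]; exact mul_le_mul_of_nonneg_left (hf k) (abs_nonneg _)

lemma abs_tsum_mul_le {ι : Type*} {b f : ι → ℝ} {B : ℝ}
    (hb : Summable fun k => |b k|) (hf : ∀ k, |f k| ≤ B) :
    |∑' k, b k * f k| ≤ (∑' k, |b k|) * B :=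
  tsum_of_norm_bounded (hb.hasSum.mul_right B) fun k => by
    rw [Real.norm_eq_abs, abs_mul]; exact mul_le_mul_of_nonneg_left (hf k) (abs_nonneg _)

lemma exists_abs_le_of_tendsto {y : ℕ → ℝ} {L : ℝ} (hy : Tendsto y atTop (𝓝 L)) :
    ∃ B, ∀ k, |y k| ≤ B := by
  obtain ⟨B, hB⟩ := hy.abs.bddAbove_range
  exact ⟨B, fun k => hB ⟨k, rfl⟩⟩

lemma summable_abs_mul_of_tendsto {b y : ℕ → ℝ} {L : ℝ} (hb : Summable fun k => |b k|)
    (hy : Tendsto y atTop (𝓝 L)) : Summable fun k => |b k * y k| :=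
  let ⟨_, hB⟩ := exists_abs_le_of_tendsto hy
  summable_abs_mul_of_abs_le hb hB

lemma summable_abs_and_tsum_abs_le_of_tendsto {ι : Type*} {f : ℕ → ι → ℝ} {g : ι → ℝ} {M : ℝ}
    (hs : ∀ n, Summable fun k => |f n k|) (hM : ∀ n, ∑' k, |f n k| ≤ M)
    (hg : ∀ k, Tendsto (fun n => f n k) atTop (𝓝 (g k))) :
    (Summable fun k => |g k|) ∧ ∑' k, |g k| ≤ M := by
  have hfin (u : Finset ι) : ∑ k ∈ u, |g k| ≤ M :=
    le_of_tendsto' (tendsto_finsetSum u fun k _ => (hg k).abs) fun n =>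
      ((hs n).sum_le_tsum u fun k _ => abs_nonneg _).trans (hM n)
  exact ⟨summable_of_sum_le (fun _ => abs_nonneg _) hfin,
    Real.tsum_le_of_sum_le (fun _ => abs_nonneg _) hfin⟩

theorem tendsto_tsum_mul_of_tendsto_zero {d : ℕ → ℕ → ℝ} {M : ℝ}
    (hs : ∀ n, Summable fun k => |d n k|) (hM : ∀ n, ∑' k, |d n k| ≤ M)
    (hcol : ∀ k, Tendsto (fun n => d n k) atTop (𝓝 0)) {y : ℕ → ℝ}
    (hy : Tendsto y atTop (𝓝 0)) : Tendsto (fun n => ∑' k, d n k * y k) atTop (𝓝 0) := by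
  rw [Metric.tendsto_nhds]
  intro ε hε
  obtain ⟨δ, hδ, hMδ⟩ := exists_pos_mul_lt (half_pos hε) M
  obtain ⟨K, hK⟩ := Metric.tendsto_atTop.1 hy δ hδ
  have hhead : Tendsto (fun n => ∑ k ∈ Finset.range K, d n k * y k) atTop (𝓝 0) := by
    simpa using tendsto_finsetSum (Finset.range K) fun k _ => (hcol k).mul_const (y k)
  filter_upwards [Metric.tendsto_nhds.1 hhead (ε / 2) (half_pos hε)] with n hn
  have htail : |∑' j, d n (j + K) * y (j + K)| ≤ M * δ := calc
    _ ≤ (∑' j, |d n (j + K)|) * δ := abs_tsum_mul_le ((summable_nat_add_iff K).2 (hs n))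
          fun j => by simpa [Real.dist_0_eq_abs] using (hK _ (Nat.le_add_left K j)).le
    _ ≤ M * δ := mul_le_mul_of_nonneg_right ((tsum_comp_le_tsum_of_inj (hs n)
          (fun _ => abs_nonneg _) (add_left_injective K)).trans (hM n)) hδ.le
  rw [Real.dist_0_eq_abs] at hn ⊢
  rw [← ((summable_abs_mul_of_tendsto (hs n) hy).of_abs).sum_add_tsum_nat_add K]
  calc _ ≤ |∑ k ∈ Finset.range K, d n k * y k| + |∑' j, d n (j + K) * y (j + K)| :=
        abs_add_le _ _
    _ < ε / 2 + ε / 2 := add_lt_add_of_lt_of_le hn (htail.trans hMδ.le)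
    _ = ε := add_halves ε

theorem tendsto_tsum_mul_of_tendsto {a : ℕ → ℕ → ℝ} {l x : ℕ → ℝ} {M t L : ℝ}
    (hs : ∀ n, Summable fun k => |a n k|) (hM : ∀ n, ∑' k, |a n k| ≤ M)
    (hl : ∀ k, Tendsto (fun n => a n k) atTop (𝓝 (l k)))
    (ht : Tendsto (fun n => ∑' k, a n k) atTop (𝓝 t)) (hx : Tendsto x atTop (𝓝 L)) :
    Tendsto (fun n => ∑' k, a n k * x k) atTop (𝓝 (∑' k, l k * (x k - L) + L * t)) := by
  obtain ⟨hls, hlM⟩ := summable_abs_and_tsum_abs_le_of_tendsto hs hM hl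
  have hy : Tendsto (fun k => x k - L) atTop (𝓝 0) := tendsto_sub_nhds_zero_iff.2 hx
  have hds (n : ℕ) : Summable fun k => |a n k - l k| :=
    ((hs n).add hls).of_nonneg_of_le (fun _ => abs_nonneg _) fun _ => abs_sub _ _
  have hdM (n : ℕ) : ∑' k, |a n k - l k| ≤ M + M := by
    refine ((hds n).tsum_le_tsum (fun _ => abs_sub _ _) ((hs n).add hls)).trans ?_
    rw [(hs n).tsum_add hls]
    exact add_le_add (hM n) hlM
  have hd := tendsto_tsum_mul_of_tendsto_zero hds hdM
    (fun k => by simpa using (hl k).sub_const (l k)) hy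
  have hlim := (hd.add_const (∑' k, l k * (x k - L))).add (ht.const_mul L)
  rw [zero_add] at hlim
  refine hlim.congr fun n => ?_
  have hS₁ := (summable_abs_mul_of_tendsto (hds n) hy).of_abs
  have hS₂ := (summable_abs_mul_of_tendsto hls hy).of_abs
  rw [← tsum_mul_left, ← hS₁.tsum_add hS₂, ← (hS₁.add hS₂).tsum_add ((hs n).of_abs.mul_left L)]
  exact tsum_congr fun k => by ring

lemma MatClass.summable_abs_row {a : ℕ → ℕ → ℝ} {Y : Set (ℕ → ℝ)} (h : MatClass a seqC Y)
    (n : ℕ) : Summable fun k => |a n k| := by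
  simpa using (h _ ⟨1, tendsto_const_nhds⟩).1 n

lemma MatClass.exists_tendsto_tsum_row {a : ℕ → ℕ → ℝ} (h : MatClass a seqC seqC) :
    ∃ t, Tendsto (fun n => ∑' k, a n k) atTop (𝓝 t) := by
  simpa [seqC] using (h _ ⟨1, tendsto_const_nhds⟩).2

lemma MatClass.exists_tendsto_column {a : ℕ → ℕ → ℝ} (h : MatClass a seqC seqC) (j : ℕ) :
    ∃ l, Tendsto (fun n => a n j) atTop (𝓝 l) := by
  have he : (Pi.single j 1 : ℕ → ℝ) ∈ seqC := ⟨0, tendsto_const_nhds.congr'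
    ((eventually_gt_atTop j).mono fun k hk => by simp [hk.ne'])⟩
  simpa [seqC, Pi.single_apply] using (h _ he).2

namespace ZeroAtInftyContinuousMap

variable {β : Type*} [SeminormedAddCommGroup β]

lemma norm_coe_le_norm {α : Type*} [TopologicalSpace α] (f : C₀(α, β)) (x : α) :
    ‖f x‖ ≤ ‖f‖ :=
  f.toBCF.norm_coe_le_norm x

lemma tendsto_atTop (f : C₀(ℕ, β)) : Tendsto f atTop (𝓝 0) :=
  cocompact_eq_atTop (α := ℕ) ▸ zero_at_infty f

noncomputable def ofTendstoAtTop {y : ℕ → β} (hy : Tendsto y atTop (𝓝 0)) : C₀(ℕ, β) :=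
  ⟨⟨y, continuous_of_discreteTopology⟩, by rwa [cocompact_eq_atTop]⟩

@[simp]
lemma ofTendstoAtTop_apply {y : ℕ → β} (hy : Tendsto y atTop (𝓝 0)) (k : ℕ) :
    ofTendstoAtTop hy k = y k := rfl

lemma norm_ofTendstoAtTop_le {y : ℕ → β} (hy : Tendsto y atTop (𝓝 0)) {C : ℝ} (hC : 0 ≤ C)
    (hyC : ∀ k, ‖y k‖ ≤ C) : ‖ofTendstoAtTop hy‖ ≤ C :=
  (BoundedContinuousFunction.norm_le hC).2 hyC

end ZeroAtInftyContinuousMap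

open ZeroAtInftyContinuousMap in
noncomputable def c0Pairing (b : ℕ → ℝ) (hb : Summable fun k => |b k|) : C₀(ℕ, ℝ) →L[ℝ] ℝ :=
  LinearMap.mkContinuous
    { toFun f := ∑' k, b k * f k
      map_add' f g := by
        simp only [coe_add, Pi.add_apply, mul_add]
        exact (summable_abs_mul_of_abs_le hb (norm_coe_le_norm f)).of_abs.tsum_add
          (summable_abs_mul_of_abs_le hb (norm_coe_le_norm g)).of_abs
      map_smul' c f := by simp [mul_left_comm, tsum_mul_left] }
    (∑' k, |b k|) fun f => abs_tsum_mul_le hb (norm_coe_le_norm f)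

lemma c0Pairing_apply (b : ℕ → ℝ) (hb : Summable fun k => |b k|) (f : C₀(ℕ, ℝ)) :
    c0Pairing b hb f = ∑' k, b k * f k := rfl

lemma tsum_abs_le_norm_c0Pairing (b : ℕ → ℝ) (hb : Summable fun k => |b k|) :
    ∑' k, |b k| ≤ ‖c0Pairing b hb‖ := by
  refine Real.tsum_le_of_sum_le (fun _ => abs_nonneg _) fun F => ?_
  have hF : ∀ᶠ k in atTop, k ∉ F := Nat.cofinite_eq_atTop ▸ F.eventually_cofinite_notMem
  let s := ZeroAtInftyContinuousMap.ofTendstoAtTop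
    (y := fun k => if k ∈ F then (SignType.sign (b k) : ℝ) else 0)
    (tendsto_const_nhds.congr' (hF.mono fun k hk => (if_neg hk).symm))
  have hs : ‖s‖ ≤ 1 := by
    refine ZeroAtInftyContinuousMap.norm_ofTendstoAtTop_le _ zero_le_one fun k => ?_
    by_cases hk : k ∈ F
    · simp only [hk, if_true, Real.norm_eq_abs]
      cases SignType.sign (b k) <;> simp
    · simp [hk]
  calc ∑ k ∈ F, |b k| = c0Pairing b hb s := by
        rw [c0Pairing_apply, tsum_eq_sum (s := F) fun k hk => by simp [s, hk]]
        exact Finset.sum_congr rfl fun k hk => by simp [s, hk, self_mul_sign]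
    _ ≤ ‖c0Pairing b hb s‖ := Real.le_norm_self _
    _ ≤ ‖c0Pairing b hb‖ * ‖s‖ := (c0Pairing b hb).le_opNorm s
    _ ≤ ‖c0Pairing b hb‖ := mul_le_of_le_one_right (norm_nonneg (c0Pairing b hb)) hs

theorem exists_forall_tsum_abs_le_of_bounded {a : ℕ → ℕ → ℝ} (hs : ∀ n, Summable fun k => |a n k|)
    (hbdd : ∀ f : C₀(ℕ, ℝ), ∃ C, ∀ n, |∑' k, a n k * f k| ≤ C) :
    ∃ M, ∀ n, ∑' k, |a n k| ≤ M := by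
  obtain ⟨M, hM⟩ := banach_steinhaus (g := fun n => c0Pairing (a n) (hs n)) hbdd
  exact ⟨M, fun n => (tsum_abs_le_norm_c0Pairing _ _).trans (hM n)⟩

/-- `a ∈ (c : c)` iff (4.2) `Σ_k |a(n,k)|` converges for each `n`
with `sup_n Σ_k |a(n,k)| < ∞`, (4.3) `lim_n a(n,k)` exists for each `k`, and
(4.4) `lim_n Σ_k a(n,k)` exists. -/
theorem matclass_c_c (a : ℕ → ℕ → ℝ) :
    MatClass a seqC seqC ↔
      ((∀ n, Summable fun k => |a n k|) ∧ ∃ M : ℝ, ∀ n, (∑' k, |a n k|) ≤ M) ∧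
      (∀ k, ∃ l : ℝ, Tendsto (fun n => a n k) atTop (nhds l)) ∧
      (∃ l : ℝ, Tendsto (fun n => ∑' k, a n k) atTop (nhds l)) := by
  constructor
  · intro h
    refine ⟨⟨h.summable_abs_row,
      exists_forall_tsum_abs_le_of_bounded h.summable_abs_row fun f => ?_⟩,
      h.exists_tendsto_column, h.exists_tendsto_tsum_row⟩
    obtain ⟨L, hL⟩ := (h f ⟨0, f.tendsto_atTop⟩).2
    exact exists_abs_le_of_tendsto hL
  · rintro ⟨⟨hs, M, hM⟩, hcol, t, ht⟩ x ⟨L, hx⟩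
    choose l hl using hcol
    exact ⟨fun n => summable_abs_mul_of_tendsto (hs n) hx, _,
      tendsto_tsum_mul_of_tendsto hs hM hl ht hx⟩
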